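/- For any number of clusters K ≥ 1, differential privacy parameters ε, δ ∈ (0,1), and Δ ∈ ℕ with Δ ≥ 1, let p = e^{−0.2ε/Δ} and r = 3(1 + log(1/δ)). Consider the mechanism that maps a histogram R ∈ ℕ^K to the distribution of (R₁ + Z₁, …, R_K + Z_K), where Z₁, …, Z_K are independent with Z_b ∼ NB(r, p). Then for any two histograms R, R' ∈ ℕ^K satisfying |R_b − R'_b| ≤ Δ for every b and Σ_{b=1}^{K} |R_b − R'_b| ≤ 2Δ (i.e., R and R' are the per-cluster query counts of two databases differing in the queries of a single client who makes at most Δ queries), the mechanism is (2ε, 2Δδ)-differentially private with respect to (R, R'). -/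

import Mathlib

open scoped ENNReal

/-- Probability mass function of the negative binomial distribution `NB(r, p)`:
`Pr(X = k) = (Γ(k+r)/(k!·Γ(r))) · p^k · (1−p)^r`. -/
noncomputable def nbPMF (r p : ℝ) (k : ℕ) : ℝ :=
  (Real.Gamma (k + r) / (Nat.factorial k * Real.Gamma r)) * p ^ k *
    Real.rpow (1 - p) r

/-- Mass function of the noisy-histogram mechanism on input histogram `R`: the
distribution of `(R₁ + Z₁, …, R_K + Z_K)` with the `Z_b ∼ NB(r,p)` independent. -/
noncomputable def noisyHist (K : ℕ) (r p : ℝ) (R : Fin K → ℕ) (v : Fin K → ℕ) : ℝ≥0∞ :=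
  ∏ b, if R b ≤ v b then ENNReal.ofReal (nbPMF r p (v b - R b)) else 0

/-- The probability mass assigned by a distribution to a subset `S`. -/
noncomputable def setProb {Ω : Type*} (ν : Ω → ℝ≥0∞) (S : Set Ω) : ℝ≥0∞ :=
  ∑' x : S, ν x

/-!
Write `p = e^{-α}` with `α = ε / (5Δ)`. The ratio of consecutive negative binomial masses is
`p (k + r) / (k + 1)`. It is at least `p` because `r ≥ 1`, so shifting the noise down by `d`
costs at most a factor `p⁻ᵈ = e^{αd}`; and it is at most `e^{4α}` once `k ≥ (r - 1)/(4α)`, so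
shifting it up by `d` costs at most `e^{4αd}` away from a small lower tail. Off the event that
some coordinate with `R_b < R'_b` carries noise below `t = Δ + ⌈(r - 1)/(4α)⌉`, the likelihood
ratio is therefore at most `exp (4α ∑_b |R_b - R'_b|) ≤ e^{8αΔ} ≤ e^{2ε}`. By a Chernoff bound at
`s = p²`, with the negative binomial series `∑ₖ Γ(k+r)/(k! Γ(r)) yᵏ = (1 - y)⁻ʳ` as generating
function, each of the at most `2Δ` such coordinates falls below `t` with probability at most `δ`.
-/

open scoped Nat
open Finset

section NegativeBinomial

lemma Real.Gamma_add_nat_eq_ascPochhammer_mul {r : ℝ} (hr : 0 < r) (n : ℕ) :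
    Real.Gamma (r + n) = (ascPochhammer ℝ n).eval r * Real.Gamma r := by
  induction n with
  | zero => simp
  | succ n ih =>
    rw [Nat.cast_succ, ← add_assoc, Real.Gamma_add_one (by positivity), ih,
      ascPochhammer_succ_eval]
    ring

lemma Ring.choose_add_sub_one_eq_Gamma_div {r : ℝ} (hr : 0 < r) (n : ℕ) :
    Ring.choose (r + n - 1) n = Real.Gamma (n + r) / (n ! * Real.Gamma r) := by
  rw [← Ring.multichoose_eq, add_comm, Real.Gamma_add_nat_eq_ascPochhammer_mul hr,
    ← Polynomial.ascPochhammer_smeval_eq_eval,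
    ← Ring.factorial_nsmul_multichoose_eq_ascPochhammer, nsmul_eq_mul]
  have := Real.Gamma_pos_of_pos hr
  field_simp

lemma hasSum_Gamma_div_mul_pow {r y : ℝ} (hr : 0 < r) (hy : |y| < 1) :
    HasSum (fun k : ℕ ↦ Real.Gamma (k + r) / (k ! * Real.Gamma r) * y ^ k) ((1 - y) ^ (-r)) := by
  have h := (Real.one_div_one_sub_rpow_hasFPowerSeriesOnBall_zero r).hasSum (y := y)
    (by simpa [Metric.mem_eball, enorm_eq_nnnorm, ← NNReal.coe_lt_one, Real.norm_eq_abs] using hy)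
  simp only [FormalMultilinearSeries.ofScalars_apply_eq, smul_eq_mul, zero_add,
    Ring.choose_add_sub_one_eq_Gamma_div hr] at h
  rwa [Real.rpow_neg (by linarith [le_abs_self y]), ← one_div]

variable {r p : ℝ}

lemma nbPMF_nonneg (hr : 0 ≤ r) (hp0 : 0 ≤ p) (hp1 : p ≤ 1) (k : ℕ) : 0 ≤ nbPMF r p k := by
  have := Real.Gamma_nonneg_of_nonneg hr
  have := Real.Gamma_nonneg_of_nonneg (by positivity : (0 : ℝ) ≤ k + r)
  have := Real.rpow_nonneg (sub_nonneg.2 hp1) r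
  unfold nbPMF
  positivity

lemma nbPMF_succ (hr : 0 < r) (k : ℕ) :
    nbPMF r p (k + 1) = nbPMF r p k * (p * ((k + r) / (k + 1))) := by
  have := Real.Gamma_pos_of_pos hr
  unfold nbPMF
  rw [Nat.cast_succ, add_right_comm, Real.Gamma_add_one (by positivity), Nat.factorial_succ,
    Nat.cast_mul, Nat.cast_succ, pow_succ]
  field_simp

lemma nbPMF_le_inv_mul_nbPMF_succ (hr : 1 ≤ r) (hp0 : 0 < p) (hp1 : p ≤ 1) (k : ℕ) :
    nbPMF r p k ≤ p⁻¹ * nbPMF r p (k + 1) := by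
  have hratio : 1 ≤ ((k : ℝ) + r) / (k + 1) := by
    rw [le_div_iff₀ (by positivity)]
    linarith
  have hcancel : p⁻¹ * (nbPMF r p k * (p * ((k + r) / (k + 1)))) =
      nbPMF r p k * ((k + r) / (k + 1)) := by
    field_simp
  rw [nbPMF_succ (by linarith), hcancel]
  exact le_mul_of_one_le_right (nbPMF_nonneg (by linarith) hp0.le hp1 k) hratio

lemma nbPMF_succ_le_exp_mul (hr : 0 < r) (hp0 : 0 ≤ p) (hp1 : p ≤ 1) {β : ℝ} {k : ℕ}
    (hk : r - 1 ≤ β * (k + 1)) : nbPMF r p (k + 1) ≤ Real.exp β * nbPMF r p k := by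
  have hratio : ((k : ℝ) + r) / (k + 1) ≤ Real.exp β := by
    rw [div_le_iff₀ (by positivity)]
    nlinarith [Real.add_one_le_exp β]
  have := nbPMF_nonneg hr.le hp0 hp1 k
  rw [nbPMF_succ hr, mul_comm (Real.exp β)]
  gcongr
  exact (mul_le_of_le_one_left (by positivity) hp1).trans hratio

lemma nbPMF_le_inv_pow_mul_nbPMF_add (hr : 1 ≤ r) (hp0 : 0 < p) (hp1 : p ≤ 1) (k d : ℕ) :
    nbPMF r p k ≤ p⁻¹ ^ d * nbPMF r p (k + d) := by
  induction d with
  | zero => simp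
  | succ d ih =>
    calc nbPMF r p k ≤ p⁻¹ ^ d * nbPMF r p (k + d) := ih
      _ ≤ p⁻¹ ^ d * (p⁻¹ * nbPMF r p (k + d + 1)) := by
        gcongr
        exact nbPMF_le_inv_mul_nbPMF_succ hr hp0 hp1 _
      _ = p⁻¹ ^ (d + 1) * nbPMF r p (k + (d + 1)) := by rw [pow_succ, ← add_assoc]; ring

lemma nbPMF_add_le_exp_mul (hr : 0 < r) (hp0 : 0 ≤ p) (hp1 : p ≤ 1) {β : ℝ} (hβ : 0 ≤ β)
    {k : ℕ} (hk : r - 1 ≤ β * (k + 1)) (d : ℕ) :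
    nbPMF r p (k + d) ≤ Real.exp (β * d) * nbPMF r p k := by
  induction d with
  | zero => simp
  | succ d ih =>
    have hkd : r - 1 ≤ β * ((k + d : ℕ) + 1) := by
      push_cast
      nlinarith [(Nat.cast_nonneg d : (0 : ℝ) ≤ d)]
    calc nbPMF r p (k + (d + 1)) ≤ Real.exp β * nbPMF r p (k + d) :=
          nbPMF_succ_le_exp_mul hr hp0 hp1 hkd
      _ ≤ Real.exp β * (Real.exp (β * d) * nbPMF r p k) := by gcongr
      _ = Real.exp (β * (d + 1 : ℕ)) * nbPMF r p k := by
        rw [← mul_assoc, ← Real.exp_add]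
        push_cast
        congr 2
        ring

lemma hasSum_nbPMF_mul_pow (hr : 0 < r) (hp0 : 0 ≤ p) (hp1 : p < 1) {s : ℝ} (hs0 : 0 ≤ s)
    (hs1 : s ≤ 1) :
    HasSum (fun k ↦ nbPMF r p k * s ^ k) (((1 - p) / (1 - p * s)) ^ r) := by
  have hps : |p * s| < 1 := by
    rw [abs_of_nonneg (by positivity)]
    nlinarith
  have h1ps : 0 < 1 - p * s := by linarith [le_abs_self (p * s)]
  have hterm : (fun k ↦ nbPMF r p k * s ^ k) =
      fun k : ℕ ↦ Real.Gamma (k + r) / (k ! * Real.Gamma r) * (p * s) ^ k * (1 - p) ^ r := by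
    ext k
    rw [nbPMF, mul_pow, Real.rpow_eq_pow]
    ring
  have hsum : ((1 - p) / (1 - p * s)) ^ r = (1 - p * s) ^ (-r) * (1 - p) ^ r := by
    rw [Real.div_rpow (by linarith) h1ps.le, Real.rpow_neg h1ps.le]
    ring
  rw [hterm, hsum]
  exact (hasSum_Gamma_div_mul_pow hr hps).mul_right _

lemma hasSum_nbPMF (hr : 0 < r) (hp0 : 0 ≤ p) (hp1 : p < 1) : HasSum (nbPMF r p) 1 := by
  have h := hasSum_nbPMF_mul_pow hr hp0 hp1 zero_le_one le_rfl
  simp only [one_pow, mul_one] at h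
  rwa [div_self (by linarith), Real.one_rpow] at h

/-- Chernoff bound: `Pr(X < t) ≤ 𝔼[sˣ] / s^(t-1)`. -/
lemma sum_range_nbPMF_le (hr : 0 < r) (hp0 : 0 ≤ p) (hp1 : p < 1) {s : ℝ} (hs0 : 0 < s)
    (hs1 : s ≤ 1) (t : ℕ) :
    ∑ k ∈ range t, nbPMF r p k ≤ ((1 - p) / (1 - p * s)) ^ r / s ^ (t - 1) := by
  have hnonneg := nbPMF_nonneg hr.le hp0 hp1.le
  rw [le_div_iff₀ (by positivity), sum_mul]
  calc ∑ k ∈ range t, nbPMF r p k * s ^ (t - 1) ≤ ∑ k ∈ range t, nbPMF r p k * s ^ k := by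
        refine sum_le_sum fun k hk ↦ mul_le_mul_of_nonneg_left ?_ (hnonneg k)
        exact pow_le_pow_of_le_one hs0.le hs1 (by rw [mem_range] at hk; omega)
    _ ≤ ((1 - p) / (1 - p * s)) ^ r :=
        sum_le_hasSum _ (fun k _ ↦ mul_nonneg (hnonneg k) (by positivity))
          (hasSum_nbPMF_mul_pow hr hp0 hp1 hs0.le hs1)

end NegativeBinomial

lemma Real.exp_five_sixths_le : Real.exp (5 / 6) ≤ 61 / 25 := by
  have h6 : Real.exp (5 / 6) ^ 6 = Real.exp 1 ^ 5 := by
    rw [← Real.exp_nat_mul, ← Real.exp_nat_mul]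
    norm_num
  have he5 : Real.exp 1 ^ 5 ≤ (2.7182818286 : ℝ) ^ 5 :=
    pow_le_pow_left₀ (Real.exp_pos 1).le Real.exp_one_lt_d9.le 5
  refine le_of_pow_le_pow_left₀ (n := 6) (by norm_num) (by norm_num) ?_
  rw [h6]
  exact he5.trans (by norm_num)

/-- Chernoff bound at `s = p²`, where `(1 - p) / (1 - p³) = 1 / (1 + p + p²) ≤ e^{-5/6}` once
`p ≥ 4/5`. -/
lemma sum_range_nbPMF_exp_neg_le {α r : ℝ} (hα0 : 0 < α) (hα : α ≤ 1 / 5) (hr : 0 < r) (t : ℕ) :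
    ∑ k ∈ range t, nbPMF r (Real.exp (-α)) k ≤ Real.exp (2 * α * (t - 1 : ℕ) - 5 / 6 * r) := by
  set p := Real.exp (-α) with hp
  have hp0 : 0 < p := Real.exp_pos _
  have hp1 : p < 1 := Real.exp_lt_one_iff.2 (by linarith)
  have hp45 : 4 / 5 ≤ p := by linarith [Real.add_one_le_exp (-α)]
  have hbase : (1 - p) / (1 - p * p ^ 2) ≤ Real.exp (-(5 / 6)) := by
    have hfactor : (1 - p) / (1 - p * p ^ 2) = 1 / (1 + p + p ^ 2) := by
      rw [show 1 - p * p ^ 2 = (1 - p) * (1 + p + p ^ 2) by ring,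
        div_mul_cancel_left₀ (by linarith), one_div]
    rw [hfactor, Real.exp_neg, ← one_div]
    exact one_div_le_one_div_of_le (Real.exp_pos _)
      (Real.exp_five_sixths_le.trans (by nlinarith))
  have hgf : ((1 - p) / (1 - p * p ^ 2)) ^ r ≤ Real.exp (-(5 / 6) * r) := by
    rw [Real.exp_mul]
    refine Real.rpow_le_rpow (div_nonneg (by linarith) (by nlinarith)) hbase hr.le
  have hpow : (p ^ 2) ^ (t - 1) = Real.exp (-(2 * α * (t - 1 : ℕ))) := by
    rw [hp, ← Real.exp_nat_mul, ← Real.exp_nat_mul]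
    push_cast
    congr 1
    ring
  calc ∑ k ∈ range t, nbPMF r p k ≤ ((1 - p) / (1 - p * p ^ 2)) ^ r / (p ^ 2) ^ (t - 1) :=
        sum_range_nbPMF_le hr hp0.le hp1 (by positivity) (pow_le_one₀ hp0.le hp1.le) t
    _ ≤ Real.exp (-(5 / 6) * r) / Real.exp (-(2 * α * (t - 1 : ℕ))) := by
        rw [hpow]
        gcongr
    _ = Real.exp (2 * α * (t - 1 : ℕ) - 5 / 6 * r) := by
        rw [← Real.exp_sub]
        congr 1
        ring

lemma sum_range_nbPMF_exp_neg_le_of_log {α δ r : ℝ} {Δ : ℕ} (hα0 : 0 < α) (hα : α ≤ 1 / 5)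
    (hαΔ : α * Δ ≤ 3 / 4) (hδ0 : 0 < δ) (hδ1 : δ ≤ 1) (hr : r = 3 * (1 + Real.log (1 / δ))) :
    ∑ k ∈ range (Δ + ⌈(r - 1) / (4 * α)⌉₊), nbPMF r (Real.exp (-α)) k ≤ δ := by
  have hlog : 0 ≤ Real.log (1 / δ) := Real.log_nonneg (by rw [le_div_iff₀ hδ0]; linarith)
  have hδ : δ = Real.exp (1 - r / 3) := by
    rw [hr, one_div, Real.log_inv, show 1 - 3 * (1 + -Real.log δ) / 3 = Real.log δ by ring,
      Real.exp_log hδ0]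
  have hx : 0 < (r - 1) / (4 * α) := div_pos (by linarith) (by linarith)
  have hceil : (⌈(r - 1) / (4 * α)⌉₊ : ℝ) - 1 < (r - 1) / (4 * α) := by
    linarith [Nat.ceil_lt_add_one hx.le]
  have ht : ((Δ + ⌈(r - 1) / (4 * α)⌉₊ - 1 : ℕ) : ℝ) ≤ Δ + (r - 1) / (4 * α) := by
    rw [Nat.cast_sub (by have := Nat.ceil_pos.2 hx; omega)]
    push_cast
    linarith
  have hexp : 2 * α * ((r - 1) / (4 * α)) = (r - 1) / 2 := by
    field_simp
    ring
  refine (sum_range_nbPMF_exp_neg_le hα0 hα (by linarith) _).trans ?_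
  rw [hδ, Real.exp_le_exp]
  nlinarith [mul_le_mul_of_nonneg_left ht (by positivity : (0 : ℝ) ≤ 2 * α)]

lemma ENNReal.tsum_fin_pi_prod {α : Type*} :
    ∀ {K : ℕ} (g : Fin K → α → ℝ≥0∞), ∑' v : Fin K → α, ∏ b, g b (v b) = ∏ b, ∑' a, g b a
  | 0, g => by simp
  | K + 1, g => by
    rw [← (Fin.consEquiv fun _ ↦ α).tsum_eq, ENNReal.tsum_prod', Fin.prod_univ_succ]
    simp only [Fin.consEquiv_apply, Fin.prod_univ_succ, Fin.cons_zero, Fin.cons_succ]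
    simp only [ENNReal.tsum_mul_left, ENNReal.tsum_fin_pi_prod, ENNReal.tsum_mul_right]

lemma ENNReal.prod_le_ofReal_exp_sum_mul_prod {ι : Type*} (s : Finset ι) {f g : ι → ℝ≥0∞}
    {c : ι → ℝ} (h : ∀ i ∈ s, f i ≤ ENNReal.ofReal (Real.exp (c i)) * g i) :
    ∏ i ∈ s, f i ≤ ENNReal.ofReal (Real.exp (∑ i ∈ s, c i)) * ∏ i ∈ s, g i := by
  rw [Real.exp_sum, ENNReal.ofReal_prod_of_nonneg fun i _ ↦ (Real.exp_pos _).le,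
    ← prod_mul_distrib]
  exact prod_le_prod' h

lemma setProb_le_mul_setProb_add_setProb {Ω : Type*} {ν ν' : Ω → ℝ≥0∞} {B : Set Ω} {c : ℝ≥0∞}
    (h : ∀ v ∉ B, ν v ≤ c * ν' v) (S : Set Ω) :
    setProb ν S ≤ c * setProb ν' S + setProb ν B := by
  have hgood : setProb ν (S \ B) ≤ c * setProb ν' S := by
    unfold setProb
    rw [← ENNReal.tsum_mul_left]
    calc ∑' v : ↥(S \ B), ν v ≤ ∑' v : ↥(S \ B), c * ν' v :=
          ENNReal.tsum_le_tsum fun v ↦ h v v.2.2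
      _ ≤ ∑' v : S, c * ν' v := ENNReal.tsum_mono_subtype (fun v ↦ c * ν' v) Set.sdiff_subset
  calc setProb ν S ≤ setProb ν (S \ B ∪ B) :=
        ENNReal.tsum_mono_subtype ν (by simp)
    _ ≤ setProb ν (S \ B) + setProb ν B := ENNReal.tsum_union_le ν _ _
    _ ≤ c * setProb ν' S + setProb ν B := by gcongr

noncomputable def shiftedNBPMF (r p : ℝ) (m n : ℕ) : ℝ≥0∞ :=
  if m ≤ n then ENNReal.ofReal (nbPMF r p (n - m)) else 0

section ShiftedNB

variable {r p : ℝ}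

lemma noisyHist_eq_prod (K : ℕ) (R v : Fin K → ℕ) :
    noisyHist K r p R v = ∏ b, shiftedNBPMF r p (R b) (v b) := rfl

lemma shiftedNBPMF_add (m k : ℕ) : shiftedNBPMF r p m (m + k) = ENNReal.ofReal (nbPMF r p k) := by
  simp [shiftedNBPMF]

lemma shiftedNBPMF_of_lt {m n : ℕ} (h : n < m) : shiftedNBPMF r p m n = 0 := by
  simp [shiftedNBPMF, Nat.not_le.2 h]

lemma tsum_shiftedNBPMF_mul (m : ℕ) (g : ℕ → ℝ≥0∞) :
    ∑' n, shiftedNBPMF r p m n * g n = ∑' k, ENNReal.ofReal (nbPMF r p k) * g (m + k) := by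
  rw [← (add_right_injective m).tsum_eq]
  · simp only [shiftedNBPMF_add]
  · intro n hn
    rcases lt_or_ge n m with h | h
    · simp [shiftedNBPMF_of_lt h] at hn
    · exact ⟨n - m, by simp [h]⟩

lemma tsum_shiftedNBPMF (hr : 0 < r) (hp0 : 0 ≤ p) (hp1 : p < 1) (m : ℕ) :
    ∑' n, shiftedNBPMF r p m n = 1 := by
  have hsum := hasSum_nbPMF hr hp0 hp1
  simpa [← ENNReal.ofReal_tsum_of_nonneg (nbPMF_nonneg hr.le hp0 hp1.le) hsum.summable,
    hsum.tsum_eq] using tsum_shiftedNBPMF_mul (r := r) (p := p) m 1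

lemma shiftedNBPMF_le_of_le (hr : 1 ≤ r) (hp0 : 0 < p) (hp1 : p ≤ 1) {m' m : ℕ} (h : m' ≤ m)
    (n : ℕ) : shiftedNBPMF r p m n ≤ ENNReal.ofReal (p⁻¹ ^ (m - m')) * shiftedNBPMF r p m' n := by
  rcases lt_or_ge n m with hn | hn
  · simp [shiftedNBPMF_of_lt hn]
  obtain ⟨k, rfl⟩ := Nat.exists_eq_add_of_le hn
  obtain ⟨d, rfl⟩ := Nat.exists_eq_add_of_le h
  rw [shiftedNBPMF_add, add_assoc, shiftedNBPMF_add, Nat.add_sub_cancel_left,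
    ← ENNReal.ofReal_mul (by positivity), add_comm d]
  exact ENNReal.ofReal_le_ofReal (nbPMF_le_inv_pow_mul_nbPMF_add hr hp0 hp1 k d)

lemma shiftedNBPMF_le_of_ge (hr : 0 < r) (hp0 : 0 ≤ p) (hp1 : p ≤ 1) {β : ℝ} (hβ : 0 ≤ β)
    {k₀ : ℕ} (hk₀ : r - 1 ≤ β * (k₀ + 1)) {m m' n : ℕ} (h : m ≤ m') (hn : m' + k₀ ≤ n) :
    shiftedNBPMF r p m n ≤
      ENNReal.ofReal (Real.exp (β * (m' - m : ℕ))) * shiftedNBPMF r p m' n := by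
  obtain ⟨k, rfl⟩ := Nat.exists_eq_add_of_le (le_of_add_le_left hn)
  obtain ⟨d, rfl⟩ := Nat.exists_eq_add_of_le h
  have hk : r - 1 ≤ β * (k + 1) :=
    hk₀.trans (by gcongr; exact_mod_cast Nat.le_of_add_le_add_left hn)
  rw [shiftedNBPMF_add, add_assoc, shiftedNBPMF_add, Nat.add_sub_cancel_left,
    ← ENNReal.ofReal_mul (by positivity), add_comm d]
  exact ENNReal.ofReal_le_ofReal (nbPMF_add_le_exp_mul hr hp0 hp1 hβ hk d)

lemma shiftedNBPMF_le_exp_mul (hr : 1 ≤ r) (hp0 : 0 < p) (hp1 : p ≤ 1) {β : ℝ}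
    (hβ : p⁻¹ ≤ Real.exp β) {k₀ : ℕ} (hk₀ : r - 1 ≤ β * (k₀ + 1)) {m m' n : ℕ}
    (hfar : m < m' → m' + k₀ ≤ n) :
    shiftedNBPMF r p m n ≤
      ENNReal.ofReal (Real.exp (β * |(m : ℝ) - m'|)) * shiftedNBPMF r p m' n := by
  rcases lt_or_ge m m' with h | h
  · have hβ0 : 0 ≤ β := Real.one_le_exp_iff.1 ((one_le_inv₀ hp0).2 hp1 |>.trans hβ)
    rw [abs_sub_comm, abs_of_nonneg (by simpa using h.le), ← Nat.cast_sub h.le]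
    exact shiftedNBPMF_le_of_ge (by linarith) hp0.le hp1 hβ0 hk₀ h.le (hfar h)
  · rw [abs_of_nonneg (by simpa using h), ← Nat.cast_sub h, mul_comm β, Real.exp_nat_mul]
    refine (shiftedNBPMF_le_of_le hr hp0 hp1 h n).trans ?_
    gcongr

end ShiftedNB

lemma card_filter_lt_le_sum_abs_sub {ι : Type*} [Fintype ι] (f g : ι → ℕ) :
    (#{b | f b < g b} : ℤ) ≤ ∑ b, |(f b : ℤ) - g b| :=
  calc (#{b | f b < g b} : ℤ) = ∑ b with f b < g b, 1 := by simp
    _ ≤ ∑ b with f b < g b, |(f b : ℤ) - g b| := sum_le_sum fun b hb ↦ by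
        have := (mem_filter.1 hb).2
        rw [abs_sub_comm, abs_of_pos (by omega)]
        omega
    _ ≤ ∑ b, |(f b : ℤ) - g b| :=
        sum_le_sum_of_subset_of_nonneg (filter_subset _ _) fun _ _ _ ↦ abs_nonneg _

section NoisyHistogram

variable {r p : ℝ} {K : ℕ}

lemma noisyHist_le_exp_mul (hr : 1 ≤ r) (hp0 : 0 < p) (hp1 : p ≤ 1) {β : ℝ}
    (hβ : p⁻¹ ≤ Real.exp β) {k₀ : ℕ} (hk₀ : r - 1 ≤ β * (k₀ + 1)) {R R' v : Fin K → ℕ}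
    (hfar : ∀ b, R b < R' b → R' b + k₀ ≤ v b) :
    noisyHist K r p R v ≤
      ENNReal.ofReal (Real.exp (β * ∑ b, |(R b : ℝ) - R' b|)) * noisyHist K r p R' v := by
  rw [noisyHist_eq_prod, noisyHist_eq_prod, mul_sum]
  exact ENNReal.prod_le_ofReal_exp_sum_mul_prod _ fun b _ ↦
    shiftedNBPMF_le_exp_mul hr hp0 hp1 hβ hk₀ (hfar b)

lemma setProb_noisyHist_lt (hr : 0 < r) (hp0 : 0 ≤ p) (hp1 : p < 1) (R : Fin K → ℕ) (b : Fin K)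
    (t : ℕ) :
    setProb (noisyHist K r p R) {v | v b < R b + t} =
      ∑ k ∈ range t, ENNReal.ofReal (nbPMF r p k) := by
  set χ : ℕ → ℝ≥0∞ := fun n ↦ if n < R b + t then 1 else 0
  have hfactor : ∀ v, {v | v b < R b + t}.indicator (noisyHist K r p R) v =
      ∏ c, shiftedNBPMF r p (R c) (v c) * if c = b then χ (v c) else 1 := by
    intro v
    rw [prod_mul_distrib, prod_ite_eq' univ b, if_pos (mem_univ b), ← noisyHist_eq_prod]
    by_cases h : v b < R b + t <;> simp [χ, h]
  rw [setProb, _root_.tsum_subtype, tsum_congr hfactor,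
    ENNReal.tsum_fin_pi_prod fun c n ↦ shiftedNBPMF r p (R c) n * if c = b then χ n else 1,
    prod_eq_single b]
  · simp only [if_true, tsum_shiftedNBPMF_mul]
    rw [tsum_eq_sum (s := range t)]
    · exact sum_congr rfl fun k hk ↦ by simp [χ, mem_range.1 hk]
    · intro k hk
      simp [χ, mem_range.not.1 hk]
  · intro c _ hc
    simp [hc, tsum_shiftedNBPMF hr hp0 hp1]
  · simp

lemma setProb_noisyHist_exists_lt_le (hr : 0 < r) (hp0 : 0 ≤ p) (hp1 : p < 1)
    (R R' : Fin K → ℕ) (t : ℕ) :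
    setProb (noisyHist K r p R) {v | ∃ b, R b < R' b ∧ v b < R b + t} ≤
      #{b | R b < R' b} * ENNReal.ofReal (∑ k ∈ range t, nbPMF r p k) := by
  have hunion : {v : Fin K → ℕ | ∃ b, R b < R' b ∧ v b < R b + t} =
      ⋃ b ∈ ({b | R b < R' b} : Finset (Fin K)), {v | v b < R b + t} := by
    ext v
    simp
  rw [hunion, ENNReal.ofReal_sum_of_nonneg fun k _ ↦ nbPMF_nonneg hr.le hp0 hp1.le k,
    ← nsmul_eq_mul, ← sum_const]
  refine (ENNReal.tsum_biUnion_le _ _ _).trans (sum_le_sum fun b _ ↦ ?_)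
  exact (setProb_noisyHist_lt hr hp0 hp1 R b t).le

lemma setProb_noisyHist_le_exp_mul_add (hr : 1 ≤ r) (hp0 : 0 < p) (hp1 : p < 1) {β : ℝ}
    (hβ : p⁻¹ ≤ Real.exp β) {k₀ : ℕ} (hk₀ : r - 1 ≤ β * (k₀ + 1)) {Δ : ℕ} {R R' : Fin K → ℕ}
    (hcoord : ∀ b, |(R b : ℤ) - (R' b : ℤ)| ≤ (Δ : ℤ)) (S : Set (Fin K → ℕ)) :
    setProb (noisyHist K r p R) S ≤
      ENNReal.ofReal (Real.exp (β * ∑ b, |(R b : ℝ) - R' b|)) * setProb (noisyHist K r p R') S +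
        #{b | R b < R' b} * ENNReal.ofReal (∑ k ∈ range (Δ + k₀), nbPMF r p k) := by
  refine (setProb_le_mul_setProb_add_setProb
    (B := {v | ∃ b, R b < R' b ∧ v b < R b + (Δ + k₀)}) (fun v hv ↦ ?_) S).trans
    (add_le_add le_rfl (setProb_noisyHist_exists_lt_le (by linarith) hp0.le hp1 R R' _))
  refine noisyHist_le_exp_mul hr hp0 hp1.le hβ hk₀ fun b hb ↦ ?_
  have := abs_le.1 (hcoord b)
  have : ¬ v b < R b + (Δ + k₀) := fun h ↦ hv ⟨b, hb, h⟩
  omega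

end NoisyHistogram

lemma setProb_noisyHist_le {ε δ : ℝ} (hε : ε ∈ Set.Ioo (0 : ℝ) 1) (hδ : δ ∈ Set.Ioo (0 : ℝ) 1)
    {Δ : ℕ} (hΔ : 1 ≤ Δ) {p r : ℝ} (hp : p = Real.exp (-(0.2 * ε / (Δ : ℝ))))
    (hr : r = 3 * (1 + Real.log (1 / δ))) {K : ℕ} {R R' : Fin K → ℕ}
    (hcoord : ∀ b, |(R b : ℤ) - (R' b : ℤ)| ≤ (Δ : ℤ))
    (htotal : ∑ b, |(R b : ℤ) - (R' b : ℤ)| ≤ 2 * (Δ : ℤ)) (S : Set (Fin K → ℕ)) :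
    setProb (noisyHist K r p R) S ≤
      ENNReal.ofReal (Real.exp (2 * ε)) * setProb (noisyHist K r p R') S +
        ENNReal.ofReal (2 * (Δ : ℝ) * δ) := by
  obtain ⟨hε0, hε1⟩ := hε
  obtain ⟨hδ0, hδ1⟩ := hδ
  set α := 0.2 * ε / (Δ : ℝ)
  have hΔ1 : (1 : ℝ) ≤ Δ := by exact_mod_cast hΔ
  have hαΔ : α * Δ = ε / 5 := by
    simp only [α]
    field_simp
    norm_num
  have hα0 : 0 < α := by positivity
  have hp0 : 0 < p := hp ▸ Real.exp_pos _
  have hp1 : p < 1 := hp ▸ Real.exp_lt_one_iff.2 (by linarith)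
  have hr1 : 1 ≤ r := by
    have := Real.log_nonneg (by rw [le_div_iff₀ hδ0]; linarith : (1 : ℝ) ≤ 1 / δ)
    linarith
  have hk₀ : r - 1 ≤ 4 * α * (⌈(r - 1) / (4 * α)⌉₊ + 1) := by
    have := (div_le_iff₀' (by positivity)).1 (Nat.le_ceil ((r - 1) / (4 * α)))
    linarith
  have hβ : p⁻¹ ≤ Real.exp (4 * α) := by
    rw [hp, ← Real.exp_neg, neg_neg, Real.exp_le_exp]
    linarith
  have hsum : ∑ b, |(R b : ℝ) - R' b| ≤ 2 * Δ := by exact_mod_cast htotal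
  have hcard : #{b | R b < R' b} ≤ 2 * Δ := by
    have := card_filter_lt_le_sum_abs_sub R R'
    omega
  have htail := sum_range_nbPMF_exp_neg_le_of_log hα0 (by nlinarith) (by linarith) hδ0 hδ1.le hr
    (Δ := Δ)
  rw [← hp] at htail
  refine (setProb_noisyHist_le_exp_mul_add hr1 hp0 hp1 hβ hk₀ hcoord S).trans ?_
  calc _ ≤ ENNReal.ofReal (Real.exp (2 * ε)) * setProb (noisyHist K r p R') S +
        ((2 * Δ : ℕ) : ℝ≥0∞) * ENNReal.ofReal δ := by
        gcongr ENNReal.ofReal (Real.exp ?_) * _ + ?_ * ENNReal.ofReal ?_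
        · nlinarith
        · exact_mod_cast hcard
    _ = _ := by
        rw [← ENNReal.ofReal_natCast, ← ENNReal.ofReal_mul (by positivity)]
        push_cast
        rfl

theorem noisy_histogram_dp_general
    (K : ℕ)
    (ε δ : ℝ) (hε : ε ∈ Set.Ioo (0 : ℝ) 1) (hδ : δ ∈ Set.Ioo (0 : ℝ) 1)
    (Δ : ℕ) (hΔ : 1 ≤ Δ)
    (p r : ℝ)
    (hp : p = Real.exp (-(0.2 * ε / (Δ : ℝ))))
    (hr : r = 3 * (1 + Real.log (1 / δ)))
    (R R' : Fin K → ℕ)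
    (hcoord : ∀ b, |(R b : ℤ) - (R' b : ℤ)| ≤ (Δ : ℤ))
    (htotal : ∑ b, |(R b : ℤ) - (R' b : ℤ)| ≤ 2 * (Δ : ℤ)) :
    ∀ S : Set (Fin K → ℕ),
      setProb (noisyHist K r p R) S ≤
        ENNReal.ofReal (Real.exp (2 * ε)) * setProb (noisyHist K r p R') S +
          ENNReal.ofReal (2 * (Δ : ℝ) * δ) ∧
      setProb (noisyHist K r p R') S ≤
        ENNReal.ofReal (Real.exp (2 * ε)) * setProb (noisyHist K r p R) S +
          ENNReal.ofReal (2 * (Δ : ℝ) * δ) := by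
  intro S
  have hcoord' : ∀ b, |(R' b : ℤ) - (R b : ℤ)| ≤ (Δ : ℤ) := fun b ↦
    abs_sub_comm (R b : ℤ) _ ▸ hcoord b
  have htotal' : ∑ b, |(R' b : ℤ) - (R b : ℤ)| ≤ 2 * (Δ : ℤ) := by
    simpa only [abs_sub_comm] using htotal
  exact ⟨setProb_noisyHist_le hε hδ hΔ hp hr hcoord htotal S,
    setProb_noisyHist_le hε hδ hΔ hp hr hcoord' htotal' S⟩

/-- For any `K ≥ 1` clusters, `ε, δ ∈ (0,1)`, `Δ ≥ 1`, with `p = e^{−0.2ε/Δ}` and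
`r = 3(1 + log(1/δ))`, the noisy-histogram mechanism is `(2ε, 2Δδ)`-differentially
private with respect to any pair of histograms `R, R'` with `|R_b − R'_b| ≤ Δ` for
every `b` and `Σ_b |R_b − R'_b| ≤ 2Δ`. -/
theorem noisy_histogram_dp
    (K : ℕ) (hK : 1 ≤ K)
    (ε δ : ℝ) (hε : ε ∈ Set.Ioo (0 : ℝ) 1) (hδ : δ ∈ Set.Ioo (0 : ℝ) 1)
    (Δ : ℕ) (hΔ : 1 ≤ Δ)
    (p r : ℝ)
    (hp : p = Real.exp (-(0.2 * ε / (Δ : ℝ))))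
    (hr : r = 3 * (1 + Real.log (1 / δ)))
    (R R' : Fin K → ℕ)
    (hcoord : ∀ b, |(R b : ℤ) - (R' b : ℤ)| ≤ (Δ : ℤ))
    (htotal : ∑ b, |(R b : ℤ) - (R' b : ℤ)| ≤ 2 * (Δ : ℤ)) :
    ∀ S : Set (Fin K → ℕ),
      setProb (noisyHist K r p R) S ≤
        ENNReal.ofReal (Real.exp (2 * ε)) * setProb (noisyHist K r p R') S +
          ENNReal.ofReal (2 * (Δ : ℝ) * δ) ∧
      setProb (noisyHist K r p R') S ≤
        ENNReal.ofReal (Real.exp (2 * ε)) * setProb (noisyHist K r p R) S +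
          ENNReal.ofReal (2 * (Δ : ℝ) * δ) :=
  noisy_histogram_dp_general K ε δ hε hδ Δ hΔ p r hp hr R R' hcoord htotal
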